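/- (Erdős lower bound) For k ≥ 3, R(k, k) > 2^{k/2}: there exists a 2-coloring of the edges of the complete graph on ⌊2^{k/2}⌋ vertices with no monochromatic clique of size k. -/

import Mathlib

/-- `hasRamsey N m k` : every red/blue (true/false) edge-coloring of the complete
graph on `N` vertices contains a red clique of size `m` or a blue clique of size `k`. -/
def hasRamsey (N m k : ℕ) : Prop :=
  ∀ c : Fin N → Fin N → Bool, (∀ i j, c i j = c j i) →
    (∃ s : Finset (Fin N), s.card = m ∧ ∀ i ∈ s, ∀ j ∈ s, i ≠ j → c i j = true) ∨
    (∃ s : Finset (Fin N), s.card = k ∧ ∀ i ∈ s, ∀ j ∈ s, i ≠ j → c i j = false)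

/-- The Ramsey number `R m k`, the least `N` with the Ramsey property. -/
noncomputable def ramseyNumber (m k : ℕ) : ℕ := sInf {N | hasRamsey N m k}

/-!
Colour the edges of `K_n` uniformly at random. A fixed `k`-set is monochromatic with probability
`2 ^ (1 - C(k,2))`, so when `2 * C(n,k) < 2 ^ C(k,2)` the union bound leaves a colouring with no
monochromatic `k`-clique. For `n ≤ 2 ^ (k/2)` this inequality follows from `k! * C(n,k) ≤ n^k` and
`2 ^ (k/2 + 1) < k!` (for `k ≥ 3`). Since `ramseyNumber` is an infimum (`sInf ∅ = 0`), the strict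
inequality also needs the finiteness of Ramsey numbers, from `R(m+1,k+1) ≤ R(m,k+1) + R(m+1,k)`.
-/

open Finset Nat

theorem exists_pairwise_subset_of_hasRamsey {V : Type*} [DecidableEq V] {a m k : ℕ}
    (h : hasRamsey a m k) {c : V → V → Bool} (hc : ∀ i j, c i j = c j i) {s : Finset V}
    (hs : a ≤ #s) :
    (∃ t ⊆ s, #t = m ∧ (t : Set V).Pairwise (c · · = true)) ∨
      (∃ t ⊆ s, #t = k ∧ (t : Set V).Pairwise (c · · = false)) := by
  obtain ⟨f⟩ : Nonempty (Fin a ↪ s) := Function.Embedding.nonempty_of_card_le (by simpa using hs)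
  let g : Fin a → V := fun i => f i
  have hg : Function.Injective g := Subtype.val_injective.comp f.injective
  have image_subset (u : Finset (Fin a)) : u.image g ⊆ s := by
    simp only [subset_iff, mem_image]
    rintro _ ⟨i, -, rfl⟩
    exact (f i).2
  have image_pairwise {u : Finset (Fin a)} {b : Bool}
      (hu : (u : Set (Fin a)).Pairwise fun i j => c (g i) (g j) = b) :
      ((u.image g : Finset V) : Set V).Pairwise (c · · = b) := by
    rw [coe_image]
    exact hu.image
  rcases h (fun i j => c (g i) (g j)) (fun i j => hc _ _) with ⟨u, hu, hred⟩ | ⟨u, hu, hblue⟩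
  · exact Or.inl ⟨_, image_subset u, by rw [card_image_of_injective _ hg, hu], image_pairwise hred⟩
  · exact Or.inr ⟨_, image_subset u, by rw [card_image_of_injective _ hg, hu], image_pairwise hblue⟩

theorem hasRamsey.mono {a N m k : ℕ} (h : hasRamsey a m k) (haN : a ≤ N) : hasRamsey N m k := by
  intro c hc
  rcases exists_pairwise_subset_of_hasRamsey h hc (s := univ) (by simpa using haN) with
    ⟨t, -, ht, hred⟩ | ⟨t, -, ht, hblue⟩
  exacts [Or.inl ⟨t, ht, hred⟩, Or.inr ⟨t, ht, hblue⟩]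

theorem pairwise_insert_of_forall_mem {V : Type*} [DecidableEq V] {c : V → V → Bool}
    (hc : ∀ i j, c i j = c j i) {v : V} {b : Bool} {t : Finset V}
    (hv : ∀ u ∈ t, u ≠ v ∧ c v u = b) (ht : (t : Set V).Pairwise (c · · = b)) :
    #(insert v t) = #t + 1 ∧ ((insert v t : Finset V) : Set V).Pairwise (c · · = b) := by
  refine ⟨card_insert_of_notMem fun hvt => (hv v hvt).1 rfl, ?_⟩
  rw [coe_insert]
  exact ht.insert fun u hu _ => ⟨(hv u hu).2, hc u v ▸ (hv u hu).2⟩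

theorem hasRamsey_add_add_one {a b m k : ℕ} (ha : hasRamsey a m (k + 1))
    (hb : hasRamsey b (m + 1) k) : hasRamsey (a + b + 1) (m + 1) (k + 1) := by
  intro c hc
  let v := Fin.last (a + b)
  let nbhd (col : Bool) : Finset (Fin (a + b + 1)) := {u ∈ univ.erase v | c v u = col}
  have mem_nbhd {col : Bool} {u} : u ∈ nbhd col ↔ u ≠ v ∧ c v u = col := by simp [nbhd]
  have hcard : #(nbhd true) + #(nbhd false) = a + b := by
    simpa [nbhd] using card_filter_add_card_filter_not (s := univ.erase v) (c v · = true)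
  rcases (show a ≤ #(nbhd true) ∨ b ≤ #(nbhd false) by omega) with hR | hB
  · rcases exists_pairwise_subset_of_hasRamsey ha hc hR with
      ⟨t, hts, ht, hred⟩ | ⟨t, -, ht, hblue⟩
    · obtain ⟨hcard, hred'⟩ :=
        pairwise_insert_of_forall_mem hc (fun u hu => mem_nbhd.1 (hts hu)) hred
      exact Or.inl ⟨_, by rw [hcard, ht], hred'⟩
    · exact Or.inr ⟨t, ht, hblue⟩
  · rcases exists_pairwise_subset_of_hasRamsey hb hc hB with
      ⟨t, -, ht, hred⟩ | ⟨t, hts, ht, hblue⟩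
    · exact Or.inl ⟨t, ht, hred⟩
    · obtain ⟨hcard, hblue'⟩ :=
        pairwise_insert_of_forall_mem hc (fun u hu => mem_nbhd.1 (hts hu)) hblue
      exact Or.inr ⟨_, by rw [hcard, ht], hblue'⟩

theorem exists_hasRamsey : ∀ m k : ℕ, ∃ N, hasRamsey N m k
  | 0, _ => ⟨0, fun _ _ => Or.inl ⟨∅, rfl, by simp⟩⟩
  | _, 0 => ⟨0, fun _ _ => Or.inr ⟨∅, rfl, by simp⟩⟩
  | m + 1, k + 1 =>
    let ⟨_, ha⟩ := exists_hasRamsey m (k + 1)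
    let ⟨_, hb⟩ := exists_hasRamsey (m + 1) k
    ⟨_, hasRamsey_add_add_one ha hb⟩

theorem lt_ramseyNumber_of_not_hasRamsey {n m k : ℕ} (h : ¬ hasRamsey n m k) :
    n < ramseyNumber m k := by
  by_contra! hle
  have hR : hasRamsey (ramseyNumber m k) m k := Nat.sInf_mem (exists_hasRamsey m k)
  exact h (hR.mono hle)

-- Stated as a product so that the union bound below needs no truncated subtraction.
theorem card_filter_forall_mem_eq_mul_pow {α β : Type*} [Fintype α] [DecidableEq α] [Fintype β]
    [DecidableEq β] (A : Finset α) (b : β) :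
    #{f : α → β | ∀ a ∈ A, f a = b} * Fintype.card β ^ #A =
      Fintype.card β ^ Fintype.card α := by
  have : ({f : α → β | ∀ a ∈ A, f a = b} : Finset (α → β)) =
      Fintype.piFinset fun a => if a ∈ A then {b} else univ := by
    ext f
    simp only [mem_filter, mem_univ, true_and, Fintype.mem_piFinset]
    refine forall_congr' fun a => ?_
    split_ifs <;> simp [*]
  simp only [this, Fintype.card_piFinset, apply_ite card, card_singleton, Finset.card_univ,
    prod_ite, prod_const_one, one_mul, prod_const]
  rw [← pow_add]
  congr 1
  simpa [filter_not, filter_mem_eq_inter] using card_sdiff_add_card_eq_card (subset_univ A)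

theorem forall_mem_image_offDiag_iff {α β : Type*} [DecidableEq α] {f : Sym2 α → β} {b : β}
    {s : Finset α} :
    (∀ e ∈ s.offDiag.image Sym2.mk.uncurry, f e = b) ↔
      (s : Set α).Pairwise fun i j => f s(i, j) = b := by
  simp only [forall_mem_image, mem_offDiag, Prod.forall, Function.uncurry_apply_pair, and_imp]
  exact ⟨fun h i hi j hj => h i j hi hj, fun h i j hi hj => h hi hj⟩

theorem exists_sym2_coloring_forall_not_pairwise {V : Type*} [Fintype V] [DecidableEq V] {k : ℕ}
    (h : 2 * (Fintype.card V).choose k < 2 ^ k.choose 2) :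
    ∃ χ : Sym2 V → Bool, ∀ (b : Bool) (s : Finset V), #s = k →
      ¬ (s : Set V).Pairwise fun i j => χ s(i, j) = b := by
  let events : Finset (Bool × Finset V) := univ ×ˢ powersetCard k univ
  let mono (p : Bool × Finset V) : Finset (Sym2 V → Bool) :=
    {χ | ∀ e ∈ p.2.offDiag.image Sym2.mk.uncurry, χ e = p.1}
  have card_mono : ∀ p ∈ events, #(mono p) * 2 ^ k.choose 2 = 2 ^ Fintype.card (Sym2 V) := by
    rintro ⟨b, s⟩ hp
    simp only [events, mem_product, mem_powersetCard] at hp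
    simpa only [Fintype.card_bool, Sym2.card_image_offDiag, hp.2.2] using
      card_filter_forall_mem_eq_mul_pow (s.offDiag.image Sym2.mk.uncurry) b
  have card_bad : #(events.biUnion mono) < #(univ : Finset (Sym2 V → Bool)) := by
    refine Nat.lt_of_mul_lt_mul_right (a := 2 ^ k.choose 2) ?_
    calc #(events.biUnion mono) * 2 ^ k.choose 2
        ≤ (∑ p ∈ events, #(mono p)) * 2 ^ k.choose 2 := Nat.mul_le_mul_right _ card_biUnion_le
      _ = #events * 2 ^ Fintype.card (Sym2 V) := by rw [sum_mul, sum_congr rfl card_mono]; simp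
      _ = 2 * (Fintype.card V).choose k * 2 ^ Fintype.card (Sym2 V) := by simp [events]
      _ < 2 ^ k.choose 2 * 2 ^ Fintype.card (Sym2 V) := by gcongr
      _ = #(univ : Finset (Sym2 V → Bool)) * 2 ^ k.choose 2 := by simp [mul_comm]
  obtain ⟨χ, -, hχ⟩ := exists_mem_notMem_of_card_lt_card card_bad
  refine ⟨χ, fun b s hs hpair => hχ (mem_biUnion.2 ⟨(b, s), ?_, ?_⟩)⟩
  · simp [events, hs]
  · exact mem_filter.2 ⟨mem_univ _, forall_mem_image_offDiag_iff.2 hpair⟩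

theorem two_pow_add_two_lt_factorial_sq {k : ℕ} (hk : 3 ≤ k) : 2 ^ (k + 2) < (k !) ^ 2 := by
  induction k, hk using Nat.le_induction with
  | base => norm_num [Nat.factorial]
  | succ k hk ih =>
    calc 2 ^ (k + 1 + 2) = 2 * 2 ^ (k + 2) := by ring
      _ < (k + 1) ^ 2 * (k !) ^ 2 :=
        mul_lt_mul_of_le_of_lt_of_pos_of_nonneg (by nlinarith) ih (by norm_num) (by positivity)
      _ = ((k + 1) !) ^ 2 := by rw [factorial_succ]; ring

theorem two_mul_choose_lt_two_pow_choose_two {n k : ℕ} (hk : 3 ≤ k) (hn : n * n ≤ 2 ^ k) :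
    2 * n.choose k < 2 ^ k.choose 2 := by
  have hchoose : k ! * n.choose k ≤ n ^ k :=
    descFactorial_eq_factorial_mul_choose n k ▸ descFactorial_le_pow n k
  have hexp : (2 ^ k.choose 2) ^ 2 * 2 ^ k = 2 ^ (k * k) := by
    obtain ⟨j, rfl⟩ : ∃ j, k = j + 1 := ⟨k - 1, by omega⟩
    have := add_one_mul_choose_eq j 1
    rw [choose_one_right] at this
    rw [← pow_mul, ← pow_add]
    congr 1
    nlinarith
  refine lt_of_pow_lt_pow_left₀ 2 (by positivity) (Nat.lt_of_mul_lt_mul_right (a := (k !) ^ 2) ?_)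
  calc (2 * n.choose k) ^ 2 * (k !) ^ 2 = 4 * (k ! * n.choose k) ^ 2 := by ring
    _ ≤ 4 * (n ^ k) ^ 2 := by gcongr
    _ = 4 * (n * n) ^ k := by ring
    _ ≤ 4 * (2 ^ k) ^ k := by gcongr
    _ = (2 ^ k.choose 2) ^ 2 * 2 ^ (k + 2) := by rw [← pow_mul, ← hexp]; ring
    _ < (2 ^ k.choose 2) ^ 2 * (k !) ^ 2 := by gcongr; exact two_pow_add_two_lt_factorial_sq hk

/-- Erdős lower bound: for `k ≥ 3`, `R(k, k) > 2^{k/2}`, witnessed by a 2-coloring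
of the complete graph on `⌊2^{k/2}⌋ = Nat.sqrt (2^k)` vertices with no
monochromatic clique of size `k`. -/
theorem erdos_lower_bound (k : ℕ) (hk : 3 ≤ k) :
    Nat.sqrt (2 ^ k) < ramseyNumber k k ∧
    ∃ c : Fin (Nat.sqrt (2 ^ k)) → Fin (Nat.sqrt (2 ^ k)) → Bool,
      (∀ i j, c i j = c j i) ∧
      ¬ ∃ (b : Bool) (s : Finset (Fin (Nat.sqrt (2 ^ k)))),
          s.card = k ∧ ∀ i ∈ s, ∀ j ∈ s, i ≠ j → c i j = b := by
  set n := Nat.sqrt (2 ^ k)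
  obtain ⟨χ, hχ⟩ := exists_sym2_coloring_forall_not_pairwise (V := Fin n)
    (by simpa using two_mul_choose_lt_two_pow_choose_two hk (Nat.sqrt_le (2 ^ k)))
  have hsymm (i j : Fin n) : χ s(i, j) = χ s(j, i) := by rw [Sym2.eq_swap]
  have hno : ¬ ∃ (b : Bool) (s : Finset (Fin n)),
      #s = k ∧ ∀ i ∈ s, ∀ j ∈ s, i ≠ j → χ s(i, j) = b :=
    fun ⟨b, s, hs, hmono⟩ => hχ b s hs hmono
  refine ⟨lt_ramseyNumber_of_not_hasRamsey fun h => ?_, _, hsymm, hno⟩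
  rcases h _ hsymm with ⟨s, hs, hred⟩ | ⟨s, hs, hblue⟩
  exacts [hno ⟨true, s, hs, hred⟩, hno ⟨false, s, hs, hblue⟩]
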